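/- arXiv:2508.20645 — 2 statements merged into one kernel-verified Lean document; each statement's English description precedes it below -/
import Mathlib

section
/- Let A_t ∈ ℝ^{n×n} be row-stochastic matrices (nonnegative, each row sums to 1), each having all diagonal entries and all entries on the edges of a strongly connected graph at least a > 0. Then for any sequence of stochastic vectors φ_t defined backwards by φ_{t+1}ᵀ A_t = φ_tᵀ, every entry of φ_t satisfies [φ_t]_i ≥ aⁿ/n. -/
lemma crossing_lemma {α : Type*} [DecidableEq α] {r : α → α → Prop} {S : Finset α} :
    ∀ {l j : α}, Relation.ReflTransGen r l j → l ∉ S → j ∈ S →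
    ∃ u v, u ∉ S ∧ v ∈ S ∧ r u v := by
  intro l j h
  induction h using Relation.ReflTransGen.head_induction_on with
  | refl => intro h1 h2; exact absurd h2 h1
  | @head x b hrb hbj ih =>
      intro hl hj
      by_cases hb : b ∈ S
      · exact ⟨_, _, hl, hb, hrb⟩
      · exact ih hb hj

theorem phi_entries_lower_bound (n : ℕ) (hn : 0 < n) (a : ℝ) (ha : 0 < a) (ha1 : a ≤ 1)
    (A : ℕ → Matrix (Fin n) (Fin n) ℝ)
    (E : ℕ → Fin n → Fin n → Prop)
    (hconn : ∀ t i j, Relation.ReflTransGen (E t) i j)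
    (hnonneg : ∀ t i j, 0 ≤ A t i j)
    (hrow : ∀ t i, ∑ j, A t i j = 1)
    (hdiag : ∀ t i, a ≤ A t i i)
    (hedge : ∀ t i j, E t i j → a ≤ A t i j)
    (φ : ℕ → Fin n → ℝ)
    (hφpos : ∀ t i, 0 ≤ φ t i) (hφsum : ∀ t, ∑ i, φ t i = 1)
    (hrec : ∀ t j, ∑ i, φ (t + 1) i * A t i j = φ t j) :
    ∀ t i, a ^ n / n ≤ φ t i := by
  intro t j
  have step : ∀ s l i, (l = i ∨ E s l i) → a * φ (s+1) l ≤ φ s i := by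
    intro s l i hli
    have hA : a ≤ A s l i := by
      rcases hli with h | h
      · subst h; exact hdiag s l
      · exact hedge s l i h
    calc a * φ (s+1) l ≤ A s l i * φ (s+1) l :=
          mul_le_mul_of_nonneg_right hA (hφpos _ _)
      _ = φ (s+1) l * A s l i := mul_comm _ _
      _ ≤ ∑ m, φ (s+1) m * A s m i :=
          Finset.single_le_sum (f := fun m => φ (s+1) m * A s m i)
            (fun m _ => mul_nonneg (hφpos _ _) (hnonneg _ _ _)) (Finset.mem_univ l)
      _ = φ s i := hrec s i
  have key : ∀ k, ∃ S : Finset (Fin n), j ∈ S ∧ min (k+1) n ≤ S.card ∧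
      ∀ i ∈ S, a ^ k * φ (t + k) i ≤ φ t j := by
    intro k
    induction k with
    | zero =>
      refine ⟨{j}, Finset.mem_singleton_self j, by simp [hn], ?_⟩
      intro i hi
      simp only [Finset.mem_singleton] at hi
      subst hi
      simp
    | succ k ih =>
      obtain ⟨S, hjS, hcard, hS⟩ := ih
      have hdiagstep : ∀ i ∈ S, a ^ (k+1) * φ (t + (k+1)) i ≤ φ t j := by
        intro i hi
        have h1 := step (t+k) i i (Or.inl rfl)
        have h2 := hS i hi
        have hak : (0:ℝ) ≤ a ^ k := le_of_lt (pow_pos ha k)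
        calc a ^ (k+1) * φ (t + (k+1)) i = a ^ k * (a * φ (t + k + 1) i) := by
              rw [show t + (k+1) = t + k + 1 by omega]; ring
          _ ≤ a ^ k * φ (t + k) i := mul_le_mul_of_nonneg_left h1 hak
          _ ≤ φ t j := h2
      by_cases hfull : ∀ i : Fin n, i ∈ S
      · refine ⟨S, hjS, ?_, hdiagstep⟩
        have : S = Finset.univ := Finset.eq_univ_iff_forall.mpr hfull
        rw [this, Finset.card_univ, Fintype.card_fin]
        omega
      · push_neg at hfull
        obtain ⟨l, hl⟩ := hfull
        obtain ⟨u, v, hu, hv, huv⟩ := crossing_lemma (hconn (t+k) l j) hl hjS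
        refine ⟨insert u S, Finset.mem_insert_of_mem hjS, ?_, ?_⟩
        · rw [Finset.card_insert_of_notMem hu]
          omega
        · intro i hi
          rcases Finset.mem_insert.mp hi with rfl | hiS
          · have h1 := step (t+k) i v (Or.inr huv)
            have h2 := hS v hv
            have hak : (0:ℝ) ≤ a ^ k := le_of_lt (pow_pos ha k)
            calc a ^ (k+1) * φ (t + (k+1)) i = a ^ k * (a * φ (t + k + 1) i) := by
                  rw [show t + (k+1) = t + k + 1 by omega]; ring
              _ ≤ a ^ k * φ (t + k) v := mul_le_mul_of_nonneg_left h1 hak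
              _ ≤ φ t j := h2
          · exact hdiagstep i hiS
  obtain ⟨S, hjS, hcard, hS⟩ := key (n-1)
  have hSuniv : S = Finset.univ := by
    apply Finset.eq_univ_of_card
    have hle : S.card ≤ n := le_trans (Finset.card_le_card (Finset.subset_univ S))
      (by rw [Finset.card_univ, Fintype.card_fin])
    rw [Fintype.card_fin]
    omega
  have hall : ∀ i, a ^ (n-1) * φ (t + (n-1)) i ≤ φ t j := fun i =>
    hS i (hSuniv ▸ Finset.mem_univ i)
  have hsum : ∑ i : Fin n, a ^ (n-1) * φ (t + (n-1)) i ≤ ∑ _i : Fin n, φ t j :=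
    Finset.sum_le_sum fun i _ => hall i
  rw [← Finset.mul_sum, hφsum, mul_one, Finset.sum_const, Finset.card_univ,
    Fintype.card_fin, nsmul_eq_mul] at hsum
  have hnpos : (0:ℝ) < n := Nat.cast_pos.mpr hn
  have h1 : a ^ (n-1) / n ≤ φ t j := by
    rw [div_le_iff₀ hnpos]
    linarith [hsum]
  have h2 : a ^ n ≤ a ^ (n-1) := by
    apply pow_le_pow_of_le_one (le_of_lt ha) ha1
    omega
  calc a ^ n / n ≤ a ^ (n-1) / n := by gcongr
    _ ≤ φ t j := h1
end

section
/- Let {B_t} be a sequence of column-stochastic matrices compatible with strongly connected digraphs with self-loops, with every positive entry at least b > 0. Define π_0 = 1/n (the uniform stochastic vector) and π_{t+1} = B_t π_t. Then for all t ≥ 0, π_t is a stochastic vector and every entry satisfies [π_t]_i ≥ bⁿ/n. -/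
lemma crossing_edge {α : Type*} (r : α → α → Prop) (S : Set α) {a c : α}
    (h : Relation.ReflTransGen r a c) (ha : a ∈ S) (hc : c ∉ S) :
    ∃ x ∈ S, ∃ y, y ∉ S ∧ r x y := by
  induction h with
  | refl => exact absurd ha hc
  | tail h1 h2 ih =>
    rename_i mid fin
    by_cases hm : mid ∈ S
    · exact ⟨mid, hm, fin, hc, h2⟩
    · exact ih hm

theorem pi_entries_lower_bound (n : ℕ) (hn : 0 < n) (b : ℝ) (hb : 0 < b) (hb1 : b ≤ 1)
    (B : ℕ → Matrix (Fin n) (Fin n) ℝ)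
    (E : ℕ → Fin n → Fin n → Prop)
    (hconn : ∀ t i j, Relation.ReflTransGen (E t) i j)
    (hnonneg : ∀ t i j, 0 ≤ B t i j)
    (hcol : ∀ t j, ∑ i, B t i j = 1)
    (hdiag : ∀ t i, 0 < B t i i)
    (hedge : ∀ t i j, E t i j → 0 < B t j i)
    (hminpos : ∀ t i j, 0 < B t i j → b ≤ B t i j)
    (π : ℕ → Fin n → ℝ)
    (hπ0 : ∀ i, π 0 i = 1 / n)
    (hrec : ∀ t i, π (t + 1) i = ∑ j, B t i j * π t j) :
    ∀ t, (∀ i, 0 ≤ π t i) ∧ (∑ i, π t i = 1) ∧ ∀ i, b ^ n / n ≤ π t i := by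
  have hnR : (0:ℝ) < n := by exact_mod_cast hn
  -- strengthened invariant
  have key : ∀ t, (∀ i, 0 ≤ π t i) ∧ (∑ i, π t i = 1) ∧
      ∀ k : ℕ, k ≤ n → ∃ S : Finset (Fin n),
        min (k + 1) n ≤ S.card ∧ ∀ i ∈ S, b ^ k / n ≤ π t i := by
    intro t
    induction t with
    | zero =>
      refine ⟨fun i => by rw [hπ0]; positivity, ?_, ?_⟩
      · simp only [hπ0]
        rw [Finset.sum_const, Finset.card_univ, Fintype.card_fin, nsmul_eq_mul]
        field_simp
      · intro k hk
        refine ⟨Finset.univ, ?_, ?_⟩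
        · simp [Finset.card_univ, min_le_right]
        · intro i _
          rw [hπ0 i]
          gcongr
          exact pow_le_one₀ hb.le hb1
    | succ t ih =>
      obtain ⟨hnn, hsum, hS⟩ := ih
      have hnn' : ∀ i, 0 ≤ π (t+1) i := by
        intro i
        rw [hrec]
        exact Finset.sum_nonneg fun j _ => mul_nonneg (hnonneg t i j) (hnn j)
      have hsum' : ∑ i, π (t+1) i = 1 := by
        simp only [hrec]
        rw [Finset.sum_comm]
        calc ∑ j, ∑ i, B t i j * π t j
            = ∑ j, (∑ i, B t i j) * π t j := by
              simp [Finset.sum_mul]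
          _ = ∑ j, π t j := by simp [hcol]
          _ = 1 := hsum
      refine ⟨hnn', hsum', ?_⟩
      -- helper: one step through a positive entry
      have hstep : ∀ (k : ℕ) (i j : Fin n), 0 < B t i j → b ^ k / n ≤ π t j →
          b ^ (k+1) / n ≤ π (t+1) i := by
        intro k i j hpos hbound
        rw [hrec]
        have h1 : b ^ (k+1) / n ≤ B t i j * π t j := by
          have hbB : b ≤ B t i j := hminpos t i j hpos
          calc b ^ (k+1) / n = b * (b ^ k / n) := by ring
            _ ≤ B t i j * π t j := by
                apply mul_le_mul hbB hbound (by positivity) (hnonneg t i j)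
        refine h1.trans (Finset.single_le_sum (f := fun j => B t i j * π t j) ?_ (Finset.mem_univ j))
        exact fun j _ => mul_nonneg (hnonneg t i j) (hnn j)
      intro k hk
      match k with
      | 0 =>
        -- some entry is at least 1/n
        have hex : ∃ i, 1 / (n:ℝ) ≤ π (t+1) i := by
          by_contra hcon
          push_neg at hcon
          have hlt : ∑ i, π (t+1) i < ∑ _i : Fin n, 1 / (n:ℝ) :=
            Finset.sum_lt_sum_of_nonempty (Finset.univ_nonempty_iff.mpr
              ⟨⟨0, hn⟩⟩) (fun i _ => hcon i)
          rw [hsum', Finset.sum_const, Finset.card_univ, Fintype.card_fin,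
            nsmul_eq_mul] at hlt
          rw [mul_one_div, div_self (ne_of_gt hnR)] at hlt
          exact lt_irrefl _ hlt
        obtain ⟨i, hi⟩ := hex
        refine ⟨{i}, by simp, ?_⟩
        intro j hj
        rw [Finset.mem_singleton] at hj
        subst hj
        simpa using hi
      | (k'+1) =>
        obtain ⟨S, hcard, hbnd⟩ := hS k' (Nat.le_of_succ_le hk)
        by_cases hfull : n ≤ S.card
        · refine ⟨S, le_trans (min_le_right _ _) hfull, ?_⟩
          intro i hi
          exact hstep k' i i (hdiag t i) (hbnd i hi)
        · push_neg at hfull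
          have hk1 : k' + 1 ≤ S.card := by
            rcases le_total (k'+1) n with h | h
            · simpa [min_eq_left h] using hcard
            · omega
          have hSne : S.Nonempty := Finset.card_pos.mp (by omega)
          have hCne : ∃ c, c ∉ S := by
            by_contra hc
            push_neg at hc
            have : S = Finset.univ := Finset.eq_univ_iff_forall.mpr hc
            rw [this, Finset.card_univ, Fintype.card_fin] at hfull
            omega
          obtain ⟨a, ha⟩ := hSne
          obtain ⟨c, hc⟩ := hCne
          obtain ⟨x, hx, y, hy, hxy⟩ :=
            crossing_edge (E t) (↑S : Set (Fin n)) (hconn t a c) (by simpa using ha)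
              (by simpa using hc)
          refine ⟨insert y S, ?_, ?_⟩
          · rw [Finset.card_insert_of_notMem (by simpa using hy)]
            have : min (k' + 1 + 1) n ≤ k' + 2 := min_le_left _ _
            omega
          · intro i hi
            rcases Finset.mem_insert.mp hi with h | h
            · subst h
              exact hstep k' i x (hedge t x i hxy) (hbnd x hx)
            · exact hstep k' i i (hdiag t i) (hbnd i h)
  intro t
  obtain ⟨hnn, hsum, hS⟩ := key t
  refine ⟨hnn, hsum, ?_⟩
  obtain ⟨S, hcard, hbnd⟩ := hS n le_rfl
  have : S = Finset.univ := by
    apply Finset.eq_univ_of_card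
    rw [Fintype.card_fin]
    have h1 : min (n+1) n = n := min_eq_right (by omega)
    have := hcard
    rw [h1] at this
    have h2 : S.card ≤ n := by
      simpa using Finset.card_le_univ S
    omega
  intro i
  exact hbnd i (this ▸ Finset.mem_univ i)
end
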